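/- arXiv:1307.3810 — 6 statements merged into one kernel-verified Lean document; each statement's English description precedes it below -/
import Mathlib

section
/- For any two n×m real matrices F and G, the characteristic polynomial satisfies det(F^T G - x·I_m) = Σ_{k=0}^{m} (-x)^{m-k} Σ_{|P|=k} det(F_P) det(G_P), where the inner sum is over all k×k square submatrix patterns P (i.e., pairs of k-element subsets of rows and columns), and the k=0 term is 1. -/
/-!
Expanding `det (M + c • 1)` multilinearly in the rows writes it as `∑ S, c ^ #Sᶜ • det M[S, S]`.
For `M = Fᵀ * G` the principal minor on `J` is `det ((F[·, J])ᵀ * G[·, J])`, which the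
Cauchy–Binet formula turns into `∑ I, det F[I, J] * det G[I, J]`. Cauchy–Binet itself comes from
expanding `det (A * B)` over all maps `f : Fin k → ι`: a non-injective `f` selects a matrix with a
repeated column, and an injective one is uniquely the increasing enumeration of its image
composed with a permutation, which contributes a sign.
-/

open Matrix Finset

open Function Equiv in
theorem exists_perm_comp_eq_of_range_eq {α β : Type*} {e f : α → β} (he : Injective e)
    (hf : Injective f) (h : Set.range f = Set.range e) : ∃ σ : Perm α, e ∘ σ = f :=
  ⟨(ofInjective f hf).trans ((setCongr h).trans (ofInjective e he).symm),
    funext fun a => by simp [apply_ofInjective_symm]⟩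

namespace Finset

theorem sum_filter_image_eq_sum_perm {ι M : Type*} [Fintype ι] [LinearOrder ι]
    [AddCommMonoid M] {k : ℕ} (s : Finset ι) (h : #s = k) (g : (Fin k → ι) → M) :
    ∑ f : Fin k → ι with univ.image f = s, g f =
      ∑ σ : Equiv.Perm (Fin k), g (s.orderEmbOfFin h ∘ σ) := by
  set e := s.orderEmbOfFin h
  symm
  refine sum_nbij (e ∘ ·) (fun σ _ => ?_) (fun σ _ τ _ hστ => ?_) (fun f hf => ?_) fun _ _ => rfl
  · simp [← image_image, image_univ_equiv, e, image_orderEmbOfFin_univ]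
  · ext i
    exact congrArg Fin.val (e.injective (congrFun hστ i))
  · simp only [coe_filter, mem_univ, true_and, Set.mem_ofPred_eq] at hf
    have hinj : Function.Injective f := by
      rw [← Set.injOn_univ, ← coe_univ, ← card_image_iff, hf, h, card_univ, Fintype.card_fin]
    have hrange : Set.range f = Set.range e := by
      rw [range_orderEmbOfFin, ← hf, coe_image, coe_univ, Set.image_univ]
    obtain ⟨σ, hσ⟩ := exists_perm_comp_eq_of_range_eq e.injective hinj hrange
    exact ⟨σ, mem_coe.2 (mem_univ σ), hσ⟩

end Finset

namespace Matrix

variable {R : Type*} [CommRing R]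

theorem det_mul_eq_sum_prod_mul_det_submatrix {n ι : Type*} [Fintype n] [DecidableEq n]
    [Fintype ι] (A : Matrix n ι R) (B : Matrix ι n R) :
    (A * B).det = ∑ f : n → ι, (∏ i, B (f i) i) * (A.submatrix id f).det := by
  simp only [det_apply', mul_apply, prod_univ_sum, mul_sum, Fintype.piFinset_univ,
    submatrix_apply, id_eq]
  rw [sum_comm]
  refine sum_congr rfl fun f _ => sum_congr rfl fun σ _ => ?_
  rw [prod_mul_distrib]
  ring

theorem det_mul_eq_sum_det_submatrix_mul {ι : Type*} [Fintype ι] [LinearOrder ι] {k : ℕ}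
    (A : Matrix (Fin k) ι R) (B : Matrix ι (Fin k) R) :
    (A * B).det = ∑ s : Finset ι,
      if h : #s = k then
        (A.submatrix id (s.orderEmbOfFin h)).det * (B.submatrix (s.orderEmbOfFin h) id).det
      else 0 := by
  set g : (Fin k → ι) → R := fun f => (∏ i, B (f i) i) * (A.submatrix id f).det
  have hg : ∀ f, ¬ Function.Injective f → g f = 0 := fun f hf => by
    obtain ⟨i, j, hij, hne⟩ := Function.not_injective_iff.mp hf
    simp [g, det_zero_of_column_eq (M := A.submatrix id f) hne fun r => by simp [hij]]
  rw [det_mul_eq_sum_prod_mul_det_submatrix, ← sum_fiberwise (g := fun f => univ.image f)]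
  refine sum_congr rfl fun s _ => ?_
  split_ifs with h
  · have hperm (σ : Equiv.Perm (Fin k)) :
        (A.submatrix id (s.orderEmbOfFin h ∘ σ)).det =
          σ.sign * (A.submatrix id (s.orderEmbOfFin h)).det := by
      rw [← det_permute', submatrix_submatrix, Function.id_comp]
    rw [sum_filter_image_eq_sum_perm s h g, det_apply' (B.submatrix (s.orderEmbOfFin h) id),
      mul_sum]
    refine sum_congr rfl fun σ _ => ?_
    simp only [g, hperm, submatrix_apply, Function.comp_apply, id_eq]
    ring
  · refine sum_eq_zero fun f hf => hg f fun hinj => h ?_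
    rw [← (mem_filter.mp hf).2, card_image_of_injective _ hinj, card_univ, Fintype.card_fin]

theorem det_add_smul_one {n : Type*} [Fintype n] [DecidableEq n] (M : Matrix n n R) (c : R) :
    (M + c • 1).det = ∑ s : Finset n, c ^ #sᶜ * (M.submatrix (↑) (↑) : Matrix s s R).det := by
  rw [det, show (M + c • 1 : Matrix n n R) = M.row + (c • 1 : Matrix n n R).row from rfl,
    AlternatingMap.map_add_univ]
  refine sum_congr rfl fun s _ => ?_
  have hrows : s.piecewise M.row (c • 1 : Matrix n n R).row =
      sᶜ.piecewise (fun i => c • s.piecewise M.row (1 : Matrix n n R).row i)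
        (s.piecewise M.row (1 : Matrix n n R).row) := by
    ext i : 1
    by_cases hi : i ∈ s
    · rw [piecewise_eq_of_notMem _ _ _ (notMem_compl.2 hi), piecewise_eq_of_mem _ _ _ hi,
        piecewise_eq_of_mem _ _ _ hi]
    · rw [piecewise_eq_of_mem _ _ _ (mem_compl.2 hi), piecewise_eq_of_notMem _ _ _ hi,
        piecewise_eq_of_notMem _ _ _ hi]
      rfl
  rw [hrows, ← AlternatingMap.coe_multilinearMap, MultilinearMap.map_piecewise_smul, prod_const,
    smul_eq_mul, ← det_piecewise_one_eq_submatrix_det]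
  rfl

theorem det_submatrix_orderEmbOfFin {ι : Type*} [LinearOrder ι] (M : Matrix ι ι R)
    (s : Finset ι) {k : ℕ} (h : #s = k) :
    (M.submatrix (s.orderEmbOfFin h) (s.orderEmbOfFin h)).det =
      (M.submatrix (↑) (↑) : Matrix s s R).det := by
  rw [← det_submatrix_equiv_self (s.orderIsoOfFin h).toEquiv, submatrix_submatrix]
  rfl

theorem det_submatrix_transpose_mul {ι κ : Type*} [Fintype ι] [LinearOrder ι] [LinearOrder κ]
    (F G : Matrix ι κ R) (J : Finset κ) {k : ℕ} (hJ : #J = k) :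
    ((Fᵀ * G).submatrix (J.orderEmbOfFin hJ) (J.orderEmbOfFin hJ)).det =
      ∑ I : Finset ι, if hI : #I = k then
        (F.submatrix (I.orderEmbOfFin hI) (J.orderEmbOfFin hJ)).det *
          (G.submatrix (I.orderEmbOfFin hI) (J.orderEmbOfFin hJ)).det
      else 0 := by
  rw [submatrix_mul _ _ _ id _ Function.bijective_id, ← transpose_submatrix,
    det_mul_eq_sum_det_submatrix_mul]
  simp only [← transpose_submatrix, det_transpose, submatrix_submatrix, Function.id_comp,
    Function.comp_id]

end Matrix

theorem generalized_cauchy_binet {n m : ℕ} (F G : Matrix (Fin n) (Fin m) ℝ) (x : ℝ) :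
    (Fᵀ * G - x • (1 : Matrix (Fin m) (Fin m) ℝ)).det =
      ∑ k ∈ Finset.range (m + 1), (-x) ^ (m - k) *
        ∑ I : Finset (Fin n), ∑ J : Finset (Fin m),
          (if hI : I.card = k then
            (if hJ : J.card = k then
              (F.submatrix (I.orderEmbOfFin hI) (J.orderEmbOfFin hJ)).det *
              (G.submatrix (I.orderEmbOfFin hI) (J.orderEmbOfFin hJ)).det
            else 0)
          else 0) := by
  have hcard (J : Finset (Fin m)) : #J ∈ range (m + 1) :=
    mem_range_succ_iff.2 (card_le_univ J |>.trans_eq (Fintype.card_fin m))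
  rw [sub_eq_add_neg, ← neg_smul, det_add_smul_one, ← sum_fiberwise_of_maps_to fun J _ => hcard J]
  refine sum_congr rfl fun k _ => ?_
  rw [sum_comm, mul_sum, sum_filter]
  refine sum_congr rfl fun J _ => ?_
  split_ifs with hJ
  · rw [card_compl, Fintype.card_fin, hJ, ← det_submatrix_orderEmbOfFin _ J hJ,
      det_submatrix_transpose_mul]
  · simp
end

section
/- For any real number k and any n×m real matrices F and G, det(I_m + k·F^T G) = Σ_P k^{|P|} det(F_P) det(G_P), where the sum is over all square patterns P and |P| denotes the size of the pattern. -/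
/-!
Expanding `det (1 + M)` multilinearly in its rows, each row taken either from `M` or from `1`,
writes it as the sum of all principal minors of `M`. For `M = k • Fᵀ * G` the principal minor on
the columns `J` is `k ^ #J * det (F_Jᵀ * G_J)`, which Cauchy–Binet expands over the row sets `I`
with `#I = #J`.

Cauchy–Binet: multilinearity gives `det (Aᵀ * B) = ∑ φ, (∏ j, A (φ j) j) * det (B.submatrix φ id)`
over all `φ : κ → ι`. The terms with `φ` not injective vanish, and the remaining terms with image
`s` are exactly the terms of the same expansion of `det (A_sᵀ * B_s)` whose `φ` is injective.
-/

open Matrix Finset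

namespace Matrix

variable {ι κ R : Type*} [Fintype ι] [Fintype κ] [DecidableEq κ] [CommRing R]

theorem det_one_add_eq_sum_det_submatrix [DecidableEq ι] (M : Matrix ι ι R) :
    det (1 + M) = ∑ s : Finset ι, det (M.submatrix ((↑) : s → ι) (↑)) := by
  rw [add_comm]
  change detRowAlternating (M.row + (1 : Matrix ι ι R).row) = _
  rw [AlternatingMap.map_add_univ]
  exact Finset.sum_congr rfl fun s _ => det_piecewise_one_eq_submatrix_det M s

theorem det_transpose_mul_eq_sum_prod_mul_det (A B : Matrix ι κ R) :
    det (Aᵀ * B) = ∑ φ : κ → ι, (∏ j, A (φ j) j) * det (B.submatrix φ id) := by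
  have rows : Aᵀ * B = fun j => ∑ i, A i j • B i := by
    ext j l; simp [mul_apply, Finset.sum_apply]
  change detRowAlternating (Aᵀ * B) = _
  rw [rows, ← AlternatingMap.coe_multilinearMap, MultilinearMap.map_sum]
  exact Finset.sum_congr rfl fun φ _ =>
    detRowAlternating.map_smul_univ (fun j => A (φ j) j) (fun j => B (φ j))

theorem det_transpose_mul_submatrix_eq_sum_piFinset [DecidableEq ι] (A B : Matrix ι κ R)
    (s : Finset ι) :
    det ((A.submatrix ((↑) : s → ι) id)ᵀ * (B.submatrix (↑) id : Matrix s κ R)) =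
      ∑ φ ∈ Fintype.piFinset fun _ => s, (∏ j, A (φ j) j) * det (B.submatrix φ id) := by
  rw [det_transpose_mul_eq_sum_prod_mul_det, Finset.sum_subtype _ fun φ => Fintype.mem_piFinset]
  exact (Fintype.sum_equiv Equiv.subtypePiEquivPi _ _ fun _ => rfl).symm

theorem det_transpose_mul_eq_sum_det_submatrix [DecidableEq ι] (A B : Matrix ι κ R) :
    det (Aᵀ * B) = ∑ s : Finset ι,
      if #s = Fintype.card κ then
        det ((A.submatrix ((↑) : s → ι) id)ᵀ * (B.submatrix (↑) id : Matrix s κ R))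
      else 0 := by
  set g : (κ → ι) → R := fun φ => (∏ j, A (φ j) j) * det (B.submatrix φ id)
  have g_eq_zero : ∀ φ, ¬ Function.Injective φ → g φ = 0 := by
    intro φ hφ
    obtain ⟨a, b, hab, hne⟩ : ∃ a b, φ a = φ b ∧ a ≠ b := by
      simpa [Function.Injective] using hφ
    simp only [g]
    rw [det_zero_of_row_eq hne, mul_zero]
    funext j; simp [hab]
  have sum_fiber : ∀ s : Finset ι, ∑ φ with univ.image φ = s, g φ =
      if #s = Fintype.card κ then ∑ φ ∈ Fintype.piFinset fun _ => s, g φ else 0 := by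
    intro s
    split_ifs with hs
    · refine Finset.sum_subset (fun φ hφ => ?_) fun φ hφ himage => g_eq_zero φ fun hinj => ?_
      · rw [Fintype.mem_piFinset, ← (mem_filter.1 hφ).2]
        exact fun j => mem_image_of_mem φ (mem_univ j)
      · refine himage (mem_filter.2 ⟨mem_univ φ, eq_of_subset_of_card_le ?_ ?_⟩)
        · exact image_subset_iff.2 fun j _ => Fintype.mem_piFinset.1 hφ j
        · rw [hs, card_image_of_injective _ hinj, card_univ]
    · refine Finset.sum_eq_zero fun φ hφ => g_eq_zero φ fun hinj => hs ?_
      rw [← (mem_filter.1 hφ).2, card_image_of_injective _ hinj, card_univ]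
  rw [det_transpose_mul_eq_sum_prod_mul_det, ← Finset.sum_fiberwise univ (fun φ => univ.image φ)]
  exact Finset.sum_congr rfl fun s _ => by
    rw [sum_fiber, det_transpose_mul_submatrix_eq_sum_piFinset]

theorem det_transpose_mul_eq_det_submatrix_mul_det_submatrix {ν : Type*} [Fintype ν]
    [DecidableEq ν] (A B : Matrix ι κ R) (e : ν ≃ ι) (f : ν ≃ κ) :
    det (Aᵀ * B) = det (A.submatrix e f) * det (B.submatrix e f) := by
  rw [← det_submatrix_equiv_self f, ← submatrix_mul_equiv _ _ _ e, ← transpose_submatrix,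
    det_mul, det_transpose]

end Matrix

theorem det_one_add_smul_transpose_mul {n m : ℕ} (k : ℝ) (F G : Matrix (Fin n) (Fin m) ℝ) :
    (1 + k • (Fᵀ * G)).det =
      ∑ I : Finset (Fin n), ∑ J : Finset (Fin m),
        (if h : I.card = J.card then
          k ^ I.card *
          ((F.submatrix (I.orderEmbOfFin h) (J.orderEmbOfFin rfl)).det *
           (G.submatrix (I.orderEmbOfFin h) (J.orderEmbOfFin rfl)).det)
        else 0) := by
  rw [det_one_add_eq_sum_det_submatrix, Finset.sum_comm]
  refine Finset.sum_congr rfl fun J _ => ?_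
  have principal_minor : (k • (Fᵀ * G)).submatrix ((↑) : J → Fin m) (↑) =
      k • ((F.submatrix id ((↑) : J → Fin m))ᵀ * G.submatrix id ((↑) : J → Fin m)) := by
    rw [transpose_submatrix, ← submatrix_mul _ _ _ _ _ Function.bijective_id]
    rfl
  rw [principal_minor, det_smul, det_transpose_mul_eq_sum_det_submatrix, Finset.mul_sum]
  refine Finset.sum_congr rfl fun I _ => ?_
  simp only [Fintype.card_coe]
  split_ifs with h
  · rw [submatrix_submatrix, submatrix_submatrix,
      det_transpose_mul_eq_det_submatrix_mul_det_submatrix _ _ (I.orderIsoOfFin h).toEquiv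
        (J.orderIsoOfFin rfl).toEquiv, h]
    -- `orderEmbOfFin` is by definition `orderIsoOfFin` followed by `Subtype.val`
    rfl
  · rw [mul_zero]
end

section
/- For a finite simple graph G with Laplacian L and any positive integer k, det(I + k·L) equals the number of rooted spanning forests of G whose edges are each colored with one of k colors. -/
open Matrix SimpleGraph

/-- A rooted `k`-colored spanning forest of `G`: a spanning subforest `H ≤ G`,
a root assignment sending each vertex to the root of its tree (constant on
components and reachable from each vertex), and a `k`-coloring of its edges. -/
structure RootedColoredForest {V : Type*} (G : SimpleGraph V) (k : ℕ) where
  H : SimpleGraph V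
  le : H ≤ G
  acyclic : H.IsAcyclic
  root : V → V
  reach_root : ∀ v, H.Reachable v (root v)
  root_const : ∀ u v, H.Reachable u v → root u = root v
  color : H.edgeSet → Fin k

/-!
Row `i` of `1 + t • L` is `e i + ∑_{m ~ i} t • (e i - e m)`. Expanding the determinant
multilinearly in the rows gives a sum over maps `c : V → V`, where `c i = i` picks `e i` and
`c i = m ~ i` picks `t • (e i - e m)`. The term of `c` is `t ^ #{i | c i ≠ i}` times the
determinant of the matrix with rows `e i - e (c i)` (or `e i` when `c i = i`); this is `1` when
every periodic point of `c` is fixed (ordered by the number of steps to a fixed point, the matrix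
is triangular with unit diagonal) and `0` otherwise (the rows along a cycle sum to zero). The maps of the first kind are exactly the
parent maps of the rooted spanning forests of `G`, with the fixed points as roots and the
`#{i | c i ≠ i}` edges `{i, c i}`, and `k ^ #edges` counts the `k`-colorings of such a forest.
-/

open Finset Function

variable {V : Type*}

/-- `c` is the parent map of a rooted forest whose roots are the fixed points of `c`. -/
def IsAcyclicMap (c : V → V) : Prop := periodicPts c ⊆ fixedPoints c

theorem exists_iterate_mem_periodicPts [Finite V] (c : V → V) (x : V) :
    ∃ m, c^[m] x ∈ periodicPts c := by
  obtain ⟨m, n, heq, hne⟩ : ∃ m n, c^[m] x = c^[n] x ∧ m ≠ n := by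
    simpa [Injective] using not_injective_infinite_finite (c^[·] x)
  wlog hlt : m < n generalizing m n
  · exact this n m heq.symm hne.symm (by omega)
  refine ⟨m, mk_mem_periodicPts (Nat.sub_pos_of_lt hlt) ?_⟩
  rw [IsPeriodicPt, IsFixedPt, ← iterate_add_apply, Nat.sub_add_cancel hlt.le, heq]

theorem bijOn_periodicPts_diff_fixedPoints (c : V → V) :
    Set.BijOn c (periodicPts c \ fixedPoints c) (periodicPts c \ fixedPoints c) := by
  have hbij := bijOn_periodicPts c
  refine ⟨fun v hv => ⟨hbij.mapsTo hv.1, fun h => hv.2 (hbij.injOn (hbij.mapsTo hv.1) hv.1 h)⟩,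
    hbij.injOn.mono Set.sdiff_subset, fun w hw => ?_⟩
  obtain ⟨v, hv, rfl⟩ := hbij.surjOn hw.1
  exact ⟨v, ⟨hv, fun h => hw.2 (congrArg c h)⟩, rfl⟩

namespace IsAcyclicMap

variable {c : V → V}

theorem of_apply_lt (ℓ : V → ℕ) (hℓ : ∀ v, c v ≠ v → ℓ (c v) < ℓ v) : IsAcyclicMap c := by
  intro x hx
  induction hn : ℓ x using Nat.strong_induction_on generalizing x with
  | _ n ih =>
    by_contra hcx
    have hfix : IsFixedPt c (c x) :=
      ih _ (hn ▸ hℓ x hcx) ((bijOn_periodicPts c).mapsTo hx) rfl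
    obtain ⟨p, hp, hper⟩ := mem_periodicPts.1 hx
    have : c^[p] x = c x := by
      rw [← Nat.sub_add_cancel hp, iterate_add_apply, iterate_one, hfix.iterate]
    exact hcx (hper.eq.symm.trans this).symm

variable [Finite V] (hc : IsAcyclicMap c)
include hc

theorem exists_isFixedPt_iterate (v : V) : ∃ m, IsFixedPt c (c^[m] v) :=
  (exists_iterate_mem_periodicPts c v).imp fun _ h => hc h

open scoped Classical in
noncomputable def height (v : V) : ℕ := Nat.find (hc.exists_isFixedPt_iterate v)

noncomputable def root (v : V) : V := c^[hc.height v] v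

theorem height_of_isFixedPt {v : V} (hv : IsFixedPt c v) : hc.height v = 0 := by
  classical
  exact (Nat.find_eq_zero _).2 hv

theorem height_apply {v : V} (hv : c v ≠ v) : hc.height (c v) + 1 = hc.height v := by
  classical
  exact (Nat.find_comp_succ (hc.exists_isFixedPt_iterate v)
    (hc.exists_isFixedPt_iterate (c v)) hv).symm

theorem isFixedPt_root (v : V) : IsFixedPt c (hc.root v) := by
  classical
  exact Nat.find_spec (hc.exists_isFixedPt_iterate v)

theorem root_apply (v : V) : hc.root (c v) = hc.root v := by
  by_cases hv : c v = v
  · rw [hv]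
  · rw [root, root, ← hc.height_apply hv, iterate_succ_apply]

theorem root_eq_self_iff {v : V} : hc.root v = v ↔ c v = v :=
  ⟨fun h => h ▸ hc.isFixedPt_root v, fun h => by rw [root, hc.height_of_isFixedPt h]; rfl⟩

theorem root_eq_of_invariant {ρ : V → V} (hρ : ∀ v, ρ (c v) = ρ v)
    (hfix : ∀ v, c v = v → ρ v = v) :
    hc.root = ρ := by
  funext v
  have hinv : ∀ m, ρ (c^[m] v) = ρ v := fun m => by
    induction m with
    | zero => rfl
    | succ m ih => rw [iterate_succ_apply', hρ, ih]
  rw [← hinv (hc.height v)]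
  exact (hfix _ (hc.isFixedPt_root v)).symm

end IsAcyclicMap

def parentGraph (c : V → V) : SimpleGraph V := SimpleGraph.fromRel fun v w => c v = w

section parentGraph

variable {c : V → V}

theorem parentGraph_adj {v w : V} : (parentGraph c).Adj v w ↔ v ≠ w ∧ (c v = w ∨ c w = v) :=
  fromRel_adj ..

theorem parentGraph_adj_apply {v : V} (hv : c v ≠ v) : (parentGraph c).Adj v (c v) :=
  parentGraph_adj.2 ⟨hv.symm, .inl rfl⟩

theorem parentGraph_le_iff {G : SimpleGraph V} :
    parentGraph c ≤ G ↔ ∀ v, c v ≠ v → G.Adj v (c v) := by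
  refine ⟨fun h v hv => h (parentGraph_adj_apply hv), fun h v w hvw => ?_⟩
  obtain ⟨hne, rfl | rfl⟩ := parentGraph_adj.1 hvw
  · exact h v hne.symm
  · exact (h w hne).symm

theorem reachable_iterate_parentGraph (v : V) (m : ℕ) :
    (parentGraph c).Reachable v (c^[m] v) := by
  induction m with
  | zero => rfl
  | succ m ih =>
    rw [iterate_succ_apply']
    by_cases h : c (c^[m] v) = c^[m] v
    · rwa [h]
    · exact ih.trans (parentGraph_adj_apply h).reachable

end parentGraph

namespace IsAcyclicMap

variable {c : V → V} (hc : IsAcyclicMap c)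
include hc

theorem isAcyclic_parentGraph : (parentGraph c).IsAcyclic := by
  refine isAcyclic_iff_forall_adj_isBridge.2 fun v w hvw => ?_
  wlog hw : c v = w generalizing v w
  · rw [Sym2.eq_swap]
    exact this w v hvw.symm ((parentGraph_adj.1 hvw).2.resolve_left hw)
  subst hw
  -- The edge `{v, c v}` separates the points whose orbit passes through `v` from `c v`.
  rintro ⟨p⟩
  obtain ⟨d, -, ⟨m, hm⟩, hsnd⟩ := p.exists_boundary_dart {u | ∃ m, c^[m] u = v} ⟨0, rfl⟩ <| by
    rintro ⟨m, hm⟩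
    exact (parentGraph_adj.1 hvw).1 (hc (mk_mem_periodicPts m.succ_pos hm)).symm
  obtain ⟨hadj, hd⟩ := deleteEdges_adj.1 d.adj
  obtain ⟨-, h | h⟩ := parentGraph_adj.1 hadj
  · cases m with
    | zero =>
      exact hd (by rw [Set.mem_singleton_iff, ← h]; exact congrArg (fun x => s(x, c x)) hm)
    | succ m => exact hsnd ⟨m, by rwa [← h, ← iterate_succ_apply]⟩
  · exact hsnd ⟨m + 1, by rwa [iterate_succ_apply, h]⟩

theorem eq_of_parentGraph_eq [Finite V] {c' : V → V} (hG : parentGraph c = parentGraph c')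
    (hfix : ∀ v, c v = v ↔ c' v = v) : c = c' := by
  funext v
  induction hn : hc.height v using Nat.strong_induction_on generalizing v with
  | _ n ih =>
    by_cases hv : c v = v
    · rw [hv, (hfix v).1 hv]
    obtain ⟨-, h | h⟩ := parentGraph_adj.1 (hG ▸ parentGraph_adj_apply hv)
    · exact h.symm
    · have h2 : c (c v) = v :=
        (ih _ (hn ▸ hc.height_apply hv ▸ Nat.lt_succ_self _) _ rfl).trans h
      exact absurd (hc (mk_mem_periodicPts two_pos h2)) hv

theorem card_edgeSet_parentGraph [Fintype V] [DecidableEq V] :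
    Nat.card (parentGraph c).edgeSet = #{v | c v ≠ v} := by
  rw [← Fintype.card_subtype, ← Nat.card_eq_fintype_card]
  refine Nat.card_congr (Equiv.ofBijective
    (fun v => ⟨s(v.1, c v.1), parentGraph_adj_apply v.2⟩) ⟨?_, ?_⟩).symm
  · rintro ⟨v, hv⟩ ⟨w, hw⟩ h
    obtain ⟨rfl, -⟩ | ⟨rfl, h⟩ := Sym2.eq_iff.1 (congrArg Subtype.val h)
    · rfl
    · exact absurd (hc (mk_mem_periodicPts two_pos h)) hw
  · rintro ⟨e, he⟩
    refine Sym2.inductionOn e (fun v w he => ?_) he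
    obtain ⟨hne, rfl | rfl⟩ := parentGraph_adj.1 ((mem_edgeSet _).1 he)
    · exact ⟨⟨v, hne.symm⟩, rfl⟩
    · exact ⟨⟨w, hne⟩, Subtype.ext Sym2.eq_swap⟩

variable [Finite V]

theorem reachable_root (v : V) : (parentGraph c).Reachable v (hc.root v) :=
  reachable_iterate_parentGraph v _

theorem root_eq_of_reachable {u v : V} (h : (parentGraph c).Reachable u v) :
    hc.root u = hc.root v := by
  obtain ⟨p⟩ := h
  induction p with
  | nil => rfl
  | cons hadj _ ih =>
    rw [← ih]
    obtain ⟨-, rfl | rfl⟩ := parentGraph_adj.1 hadj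
    exacts [(hc.root_apply _).symm, hc.root_apply _]

end IsAcyclicMap

section Determinant

variable (R : Type*) [CommRing R] [DecidableEq V]

def parentRow (i m : V) : V → R := Pi.single i 1 - if m = i then 0 else Pi.single m 1

def parentMatrix (c : V → V) : Matrix V V R := of fun i => parentRow R i (c i)

variable {R} [Fintype V] {c : V → V}

theorem IsAcyclicMap.det_parentMatrix (hc : IsAcyclicMap c) : (parentMatrix R c).det = 1 := by
  have hentry : ∀ i j, hc.height i ≤ hc.height j →
      parentMatrix R c i j = (1 : Matrix V V R) i j := by
    intro i j hij
    rw [show parentMatrix R c i j = parentRow R i (c i) j from rfl, parentRow, Pi.sub_apply,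
      Pi.single_apply, one_apply, if_congr eq_comm rfl rfl, sub_eq_self]
    split_ifs with hci
    · rfl
    · refine Pi.single_eq_of_ne (fun h => ?_) _
      have := hc.height_apply hci
      rw [← h] at this
      omega
  have htri : (parentMatrix R c).BlockTriangular (OrderDual.toDual ∘ hc.height) := fun i j hij => by
    rw [hentry i j hij.le, one_apply_ne (by rintro rfl; exact lt_irrefl _ hij)]
  rw [htri.det]
  refine prod_eq_one fun a _ => ?_
  rw [show (parentMatrix R c).toSquareBlock _ a = 1 from ?_, det_one]
  ext ⟨i, hi⟩ ⟨j, hj⟩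
  rw [toSquareBlock_def, of_apply, hentry i j (OrderDual.toDual.injective (hi.trans hj.symm)).le]
  simp only [one_apply, Subtype.mk.injEq]

theorem det_parentMatrix_of_not_isAcyclicMap (hc : ¬ IsAcyclicMap c) :
    (parentMatrix R c).det = 0 := by
  classical
  obtain ⟨x, hx⟩ := Set.not_subset.1 hc
  let O := (periodicPts c \ fixedPoints c).toFinset
  have hbij : Set.BijOn c O O := by
    simpa [O] using bijOn_periodicPts_diff_fixedPoints c
  have hsum : ∑ i ∈ O, parentMatrix R c i = 0 := by
    have hrow : ∀ i ∈ O, parentMatrix R c i = Pi.single i 1 - Pi.single (c i) 1 := fun i hi => by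
      rw [show parentMatrix R c i = parentRow R i (c i) from rfl, parentRow,
        if_neg (show c i ≠ i from (Set.mem_toFinset.1 hi).2)]
    rw [sum_congr rfl hrow, sum_sub_distrib, sub_eq_zero]
    exact (sum_nbij c hbij.mapsTo hbij.injOn hbij.surjOn fun _ _ => rfl).symm
  have hcomb : ∑ i, (if i ∈ O then (1 : R) else 0) • parentMatrix R c i = 0 := by
    simp only [ite_smul, one_smul, zero_smul]
    exact (sum_ite_mem univ O _).trans (by rw [univ_inter, hsum])
  have := det_updateRow_sum (parentMatrix R c) x fun i => if i ∈ O then 1 else 0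
  rw [hcomb, if_pos (Set.mem_toFinset.2 hx : x ∈ O), one_smul] at this
  rw [← this]
  exact det_eq_zero_of_row_eq_zero x fun j => by simp

open scoped Classical in
theorem det_parentMatrix : (parentMatrix R c).det = if IsAcyclicMap c then 1 else 0 := by
  split_ifs with hc
  exacts [hc.det_parentMatrix, det_parentMatrix_of_not_isAcyclicMap hc]

end Determinant

section Laplacian

variable {R : Type*} [CommRing R] [Fintype V] [DecidableEq V]
  (G : SimpleGraph V) [DecidableRel G.Adj]

def parentWeight (t : R) (i m : V) : R := if m = i then 1 else if G.Adj i m then t else 0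

theorem sum_parentWeight (t : R) (i : V) : ∑ m, parentWeight G t i m = 1 + t * G.degree i := by
  have h : ∀ m, parentWeight G t i m = (if i = m then 1 else 0) + if G.Adj i m then t else 0 := by
    intro m
    by_cases hm : m = i
    · simp [parentWeight, hm]
    · simp [parentWeight, hm, Ne.symm hm]
  simp only [h, sum_add_distrib, sum_ite_eq, mem_univ, if_true, sum_ite, sum_const_zero, add_zero,
    sum_const, nsmul_eq_mul, ← card_neighborFinset_eq_degree, neighborFinset_eq_filter, mul_comm]

theorem one_add_smul_lapMatrix_row (t : R) (i : V) :
    (1 + t • G.lapMatrix R) i = ∑ m, parentWeight G t i m • parentRow R i m := by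
  funext j
  rw [Finset.sum_apply]
  by_cases hji : j = i
  · subst hji
    have hrow : ∀ m, parentRow R j m j = 1 := fun m => by
      by_cases hm : m = j <;> simp [parentRow, hm]
    simp only [Pi.smul_apply, smul_eq_mul, hrow, mul_one, sum_parentWeight]
    simp [lapMatrix, degMatrix]
  · have hrow : ∀ m ≠ j, parentRow R i m j = 0 := fun m hm => by
      simp [parentRow, ite_apply, Pi.single_eq_of_ne hji, Pi.single_eq_of_ne (Ne.symm hm)]
    rw [sum_eq_single j (fun m _ hm => by rw [Pi.smul_apply, hrow m hm, smul_zero]) (by simp)]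
    simp [parentWeight, parentRow, hji, Ne.symm hji, lapMatrix, degMatrix]

open scoped Classical in
theorem prod_parentWeight (t : R) (c : V → V) :
    ∏ i, parentWeight G t i (c i) = if parentGraph c ≤ G then t ^ #{i | c i ≠ i} else 0 := by
  split_ifs with h
  · rw [parentGraph_le_iff] at h
    have hw : ∀ i, parentWeight G t i (c i) = if c i = i then 1 else t := fun i => by
      by_cases hi : c i = i
      · simp [parentWeight, hi]
      · simp [parentWeight, hi, h i hi]
    simp only [hw, prod_ite, prod_const_one, one_mul, prod_const, ne_eq]
  · obtain ⟨i, hi, hadj⟩ : ∃ i, c i ≠ i ∧ ¬ G.Adj i (c i) := by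
      simpa [parentGraph_le_iff] using h
    exact prod_eq_zero (mem_univ i) (by simp [parentWeight, hi, hadj])

open scoped Classical in
theorem det_one_add_smul_lapMatrix (t : R) :
    (1 + t • G.lapMatrix R).det =
      ∑ c ∈ univ.filter (fun c : V → V => IsAcyclicMap c ∧ parentGraph c ≤ G),
        t ^ #{v | c v ≠ v} := by
  have hexpand : (1 + t • G.lapMatrix R).det =
      ∑ c : V → V, (∏ i, parentWeight G t i (c i)) * (parentMatrix R c).det := by
    rw [show 1 + t • G.lapMatrix R = of fun i => ∑ m, parentWeight G t i m • parentRow R i m from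
      funext (one_add_smul_lapMatrix_row G t)]
    exact (detRowAlternating.toMultilinearMap.map_sum _).trans
      (sum_congr rfl fun c _ => detRowAlternating.map_smul_univ _ _)
  rw [hexpand, sum_filter]
  refine sum_congr rfl fun c _ => ?_
  rw [prod_parentWeight, det_parentMatrix]
  split_ifs <;> simp_all

end Laplacian

@[ext]
structure RootedForest (V : Type*) where
  H : SimpleGraph V
  acyclic : H.IsAcyclic
  root : V → V
  reach_root : ∀ v, H.Reachable v (root v)
  root_const : ∀ u v, H.Reachable u v → root u = root v

namespace RootedForest

variable (F : RootedForest V)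

/-- The vertex preceding `v` on the path from its root; `v` itself at a root, where that path
is `nil`. -/
noncomputable def parent (v : V) : V :=
  (F.reach_root v).symm.exists_isPath.choose.penultimate

variable {F}

theorem parent_eq_penultimate {u v : V} (hu : F.root v = u) {p : F.H.Walk u v} (hp : p.IsPath) :
    F.parent v = p.penultimate := by
  subst hu
  have hspec := (F.reach_root v).symm.exists_isPath.choose_spec
  exact congrArg (fun q : F.H.Path _ _ => q.1.penultimate)
    ((F.acyclic.subsingleton_path _ _).elim ⟨_, hspec⟩ ⟨p, hp⟩)

theorem adj_parent {v : V} (hv : F.root v ≠ v) : F.H.Adj (F.parent v) v := by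
  obtain ⟨p, hp⟩ := (F.reach_root v).symm.exists_isPath
  rw [parent_eq_penultimate rfl hp]
  exact p.adj_penultimate (Walk.not_nil_of_ne hv)

theorem parent_eq_self_iff {v : V} : F.parent v = v ↔ F.root v = v := by
  refine ⟨fun h => ?_, fun h => parent_eq_penultimate h Walk.IsPath.nil⟩
  by_contra hv
  exact (adj_parent hv).ne h

theorem root_parent (v : V) : F.root (F.parent v) = F.root v := by
  by_cases hv : F.root v = v
  · rw [parent_eq_self_iff.2 hv]
  · exact F.root_const _ _ (adj_parent hv).reachable

theorem parentGraph_parent : parentGraph F.parent = F.H := by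
  ext a b
  rw [parentGraph_adj]
  constructor
  · rintro ⟨hab, rfl | rfl⟩
    · exact (adj_parent fun h => hab (parent_eq_self_iff.2 h).symm).symm
    · exact adj_parent fun h => hab (parent_eq_self_iff.2 h)
  · intro hab
    refine ⟨hab.ne, ?_⟩
    obtain ⟨p, hp⟩ := (F.reach_root a).symm.exists_isPath
    obtain ⟨q, hq⟩ := ((F.reach_root a).symm.trans hab.reachable).exists_isPath
    have hroot : F.root b = F.root a := (F.root_const _ _ hab.reachable).symm
    by_cases ha : a ∈ q.support
    · exact .inr ((parent_eq_penultimate hroot hq).trans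
        (F.acyclic.eq_penultimate_of_adj_end hq hab.symm ha).symm)
    · exact .inl ((parent_eq_penultimate rfl hp).trans (F.acyclic.eq_penultimate_of_adj_end hp hab
        (F.acyclic.mem_support_of_ne_mem_support_of_adj_of_isPath hp hq hab ha)).symm)

variable (F) in
theorem isAcyclicMap_parent : IsAcyclicMap F.parent := by
  refine .of_apply_lt (fun v => F.H.dist (F.root v) v) fun v hv => ?_
  obtain ⟨p, hp, hlen⟩ := (F.reach_root v).symm.exists_path_of_dist
  have hnil : ¬ p.Nil := Walk.not_nil_of_ne fun h => hv (parent_eq_self_iff.2 h)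
  calc F.H.dist (F.root (F.parent v)) (F.parent v)
      ≤ p.dropLast.length := by
        rw [root_parent, parent_eq_penultimate rfl hp]
        exact dist_le _
    _ < F.H.dist (F.root v) v := by
        rw [← hlen, ← Walk.length_dropLast_add_one hnil]
        exact Nat.lt_succ_self _

variable (F) in
theorem root_isAcyclicMap_parent [Finite V] : F.isAcyclicMap_parent.root = F.root :=
  F.isAcyclicMap_parent.root_eq_of_invariant root_parent fun _ => parent_eq_self_iff.1

end RootedForest

noncomputable def RootedForest.ofIsAcyclicMap [Finite V] {c : V → V} (hc : IsAcyclicMap c) :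
    RootedForest V where
  H := parentGraph c
  acyclic := hc.isAcyclic_parentGraph
  root := hc.root
  reach_root := hc.reachable_root
  root_const _ _ := hc.root_eq_of_reachable

noncomputable def parentMapEquiv [Finite V] : {c : V → V // IsAcyclicMap c} ≃ RootedForest V where
  toFun c := .ofIsAcyclicMap c.2
  invFun F := ⟨F.parent, F.isAcyclicMap_parent⟩
  left_inv c := by
    refine Subtype.ext (c.2.eq_of_parentGraph_eq
      (RootedForest.parentGraph_parent (F := .ofIsAcyclicMap c.2)).symm fun v => ?_).symm
    rw [RootedForest.parent_eq_self_iff]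
    exact c.2.root_eq_self_iff.symm
  right_inv F := RootedForest.ext F.parentGraph_parent F.root_isAcyclicMap_parent

def RootedColoredForest.equivSigma (G : SimpleGraph V) (k : ℕ) :
    RootedColoredForest G k ≃ Σ F : {F : RootedForest V // F.H ≤ G}, F.1.H.edgeSet → Fin k where
  toFun F := ⟨⟨⟨F.H, F.acyclic, F.root, F.reach_root, F.root_const⟩, F.le⟩, F.color⟩
  invFun F := ⟨F.1.1.H, F.1.2, F.1.1.acyclic, F.1.1.root, F.1.1.reach_root, F.1.1.root_const, F.2⟩
  left_inv _ := rfl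
  right_inv _ := rfl

open scoped Classical in
theorem card_rootedColoredForest [Fintype V] [DecidableEq V] (G : SimpleGraph V) (k : ℕ) :
    Nat.card (RootedColoredForest G k) =
      ∑ c ∈ univ.filter (fun c : V → V => IsAcyclicMap c ∧ parentGraph c ≤ G),
        k ^ #{v | c v ≠ v} := by
  let e : {c : V → V // IsAcyclicMap c ∧ parentGraph c ≤ G} ≃ {F : RootedForest V // F.H ≤ G} :=
    (Equiv.subtypeSubtypeEquivSubtypeInter _ _).symm.trans
      (parentMapEquiv.subtypeEquiv fun _ => Iff.rfl)
  rw [Nat.card_congr ((RootedColoredForest.equivSigma G k).trans (Equiv.sigmaCongrLeft e).symm),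
    Nat.card_sigma, Finset.sum_subtype _ fun _ => mem_filter_univ _]
  refine Fintype.sum_congr _ _ fun c => ?_
  rw [Nat.card_fun, Nat.card_eq_fintype_card (α := Fin k), Fintype.card_fin]
  congr 1
  exact c.2.1.card_edgeSet_parentGraph

theorem det_one_add_smul_lapMatrix_eq_card_colored_forests_general
    {n : ℕ} (G : SimpleGraph (Fin n)) [DecidableRel G.Adj] (k : ℕ) :
    (1 + (k : ℤ) • G.lapMatrix ℤ).det = Nat.card (RootedColoredForest G k) := by
  rw [det_one_add_smul_lapMatrix, card_rootedColoredForest]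
  push_cast
  rfl

theorem det_one_add_smul_lapMatrix_eq_card_colored_forests
    {n : ℕ} (G : SimpleGraph (Fin n)) [DecidableRel G.Adj] (k : ℕ) (hk : 0 < k) :
    (1 + (k : ℤ) • G.lapMatrix ℤ).det = Nat.card (RootedColoredForest G k) :=
  det_one_add_smul_lapMatrix_eq_card_colored_forests_general G k
end

section
/- If H is a subgraph of the finite simple graph G (same vertex set), then for every positive integer k, det(I + k·L_H) ≤ det(I + k·L_G), where L_H and L_G are the respective Laplacians. -/
/-!
If `P` is positive definite and `B` positive semidefinite, then writing `P = S * S` with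
`S = √P` gives `det (P + B) = det P * det (1 + S⁻¹ B S⁻¹) ≥ det P`, because every eigenvalue
of `1 + S⁻¹ B S⁻¹` is at least `1`. Apply this to `P = 1 + k L_H` and `B = k (L_G - L_H)`;
the latter is positive semidefinite since the Laplacian form `∑_{ij ∈ E} (x i - x j)²` only
grows when edges are added.
-/

open Matrix SimpleGraph

namespace Matrix

open scoped ComplexOrder MatrixOrder

variable {𝕜 n : Type*} [RCLike 𝕜] [Fintype n] [DecidableEq n]

lemma PosSemidef.one_le_det_one_add {C : Matrix n n 𝕜} (hC : C.PosSemidef) :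
    1 ≤ (1 + C).det := by
  have hC' : IsSelfAdjoint C := hC.1
  have hcfc : 1 + C = cfc (fun x : ℝ => 1 + x) C := by
    rw [cfc_add .., cfc_const_one .., cfc_id' ..]
  rw [hcfc, hC.1.cfc_eq]
  simp only [IsHermitian.cfc, det_map, det_diagonal, Function.comp_apply, map_add, map_one]
  refine Finset.one_le_prod fun i _ => ?_
  simpa using hC.eigenvalues_nonneg i

lemma PosDef.det_le_det_add {P B : Matrix n n 𝕜} (hP : P.PosDef) (hB : B.PosSemidef) :
    P.det ≤ (P + B).det := by
  set S := CFC.sqrt P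
  have hSS : S * S = P := CFC.sqrt_mul_sqrt_self P hP.posSemidef.nonneg
  have hS : S.IsHermitian := (CFC.sqrt_nonneg P).posSemidef.1
  have hSdet : IsUnit S.det := by
    refine isUnit_of_mul_isUnit_left (y := S.det) ?_
    rw [← det_mul, hSS]
    exact hP.det_pos.ne'.isUnit
  have hC : (S⁻¹ * B * S⁻¹).PosSemidef := by
    simpa [hS.inv.eq] using hB.conjTranspose_mul_mul_same S⁻¹
  have hdecomp : P + B = S * (1 + S⁻¹ * B * S⁻¹) * S := by
    rw [mul_add, add_mul, mul_one, hSS]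
    simp only [← Matrix.mul_assoc, mul_nonsing_inv _ hSdet, one_mul]
    rw [Matrix.mul_assoc, nonsing_inv_mul _ hSdet, mul_one]
  calc P.det = P.det * 1 := (mul_one _).symm
    _ ≤ P.det * (1 + S⁻¹ * B * S⁻¹).det :=
      mul_le_mul_of_nonneg_left hC.one_le_det_one_add hP.det_pos.le
    _ = (P + B).det := by rw [hdecomp, det_mul, det_mul, mul_right_comm, ← det_mul S S, hSS]

end Matrix

namespace SimpleGraph

variable {V : Type*} [Fintype V] [DecidableEq V] {G H : SimpleGraph V}
  [DecidableRel G.Adj] [DecidableRel H.Adj]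

theorem lapMatrix_map {R S : Type*} [Ring R] [Ring S] (f : R →+* S) :
    (G.lapMatrix R).map f = G.lapMatrix S := by
  ext i j
  simp [lapMatrix, degMatrix, adjMatrix, diagonal_apply, apply_ite f]

theorem posSemidef_lapMatrix_sub_of_le (R : Type*) [Field R] [LinearOrder R]
    [IsStrictOrderedRing R] [StarRing R] [TrivialStar R] (hHG : H ≤ G) :
    (G.lapMatrix R - H.lapMatrix R).PosSemidef := by
  refine .of_dotProduct_mulVec_nonneg
    ((G.isHermitian_lapMatrix R).sub (H.isHermitian_lapMatrix R)) fun x ↦ ?_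
  rw [star_trivial, sub_mulVec, dotProduct_sub, sub_nonneg, ← toLinearMap₂'_apply',
    ← toLinearMap₂'_apply', lapMatrix_toLinearMap₂', lapMatrix_toLinearMap₂']
  gcongr with i _ j _
  split_ifs with hH hG
  · rfl
  · exact absurd (hHG hH) hG
  · positivity
  · rfl

theorem det_one_add_smul_lapMatrix_le {c : ℝ} (hc : 0 ≤ c) (hHG : H ≤ G) :
    (1 + c • H.lapMatrix ℝ).det ≤ (1 + c • G.lapMatrix ℝ).det := by
  have hP : (1 + c • H.lapMatrix ℝ).PosDef :=
    PosDef.one.add_posSemidef ((posSemidef_lapMatrix ℝ H).smul hc)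
  simpa [smul_sub] using hP.det_le_det_add ((posSemidef_lapMatrix_sub_of_le ℝ hHG).smul hc)

end SimpleGraph

theorem det_one_add_smul_lapMatrix_monotone_general
    {n : ℕ} (G H : SimpleGraph (Fin n)) [DecidableRel G.Adj] [DecidableRel H.Adj]
    (hHG : H ≤ G) (k : ℕ) :
    (1 + (k : ℤ) • H.lapMatrix ℤ).det ≤ (1 + (k : ℤ) • G.lapMatrix ℤ).det := by
  have hcast (K : SimpleGraph (Fin n)) [DecidableRel K.Adj] :
      (((1 + (k : ℤ) • K.lapMatrix ℤ).det : ℤ) : ℝ) = (1 + (k : ℝ) • K.lapMatrix ℝ).det := by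
    rw [← eq_intCast (Int.castRingHom ℝ), RingHom.map_det, map_add, map_one, natCast_zsmul,
      map_nsmul, RingHom.mapMatrix_apply, lapMatrix_map, Nat.cast_smul_eq_nsmul]
  rw [← Int.cast_le (R := ℝ), hcast, hcast]
  exact det_one_add_smul_lapMatrix_le k.cast_nonneg hHG

theorem det_one_add_smul_lapMatrix_monotone
    {n : ℕ} (G H : SimpleGraph (Fin n)) [DecidableRel G.Adj] [DecidableRel H.Adj]
    (hHG : H ≤ G) (k : ℕ) (hk : 0 < k) :
    (1 + (k : ℤ) • H.lapMatrix ℤ).det ≤ (1 + (k : ℤ) • G.lapMatrix ℤ).det :=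
  det_one_add_smul_lapMatrix_monotone_general G H hHG k
end

section
/- For any finite simple graph G on n vertices with Laplacian L and any positive integer k, 1 ≤ det(I + k·L) ≤ (1 + k·n)^{n-1}. -/
/-!
The Laplacian `L` is positive semidefinite with eigenvalues `λᵢ ≤ n`: its quadratic form
`∑_{i ~ j} (xᵢ - xⱼ)²` is at most the same sum over all pairs, which is `n ‖x‖² - (∑ xᵢ)²`.
Since `L` kills the constant vectors, some `λᵢ` is `0`. Hence `det (1 + k L) = ∏ (1 + k λᵢ)` is a
product of factors in `[1, 1 + k n]`, one of which equals `1`.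
-/

open Matrix SimpleGraph Finset

namespace Matrix.IsHermitian

variable {𝕜 n : Type*} [RCLike 𝕜] [Fintype n] [DecidableEq n] {A : Matrix n n 𝕜}

theorem det_one_add_smul (hA : A.IsHermitian) (t : 𝕜) :
    (1 + t • A).det = ∏ i, (1 + t * (hA.eigenvalues i : 𝕜)) := by
  conv_lhs =>
    rw [hA.spectral_theorem, ← map_one (Unitary.conjStarAlgAut 𝕜 _ hA.eigenvectorUnitary),
      ← map_smul, ← map_add, Unitary.conjStarAlgAut_apply]
  rw [det_mul_comm, ← mul_assoc, Unitary.coe_star_mul_self, one_mul, ← diagonal_one,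
    ← diagonal_smul, diagonal_add, det_diagonal]
  simp

theorem eigenvalues_le_of_forall_re_dotProduct_mulVec_le (hA : A.IsHermitian) {c : ℝ}
    (h : ∀ x : n → 𝕜, RCLike.re (star x ⬝ᵥ A *ᵥ x) ≤ c * RCLike.re (star x ⬝ᵥ x)) (i : n) :
    hA.eigenvalues i ≤ c := by
  have hunit := hA.eigenvectorBasis.orthonormal.1 i
  have hrayleigh := h (hA.eigenvectorBasis i)
  rw [← hA.eigenvalues_eq, dotProduct_comm, ← EuclideanSpace.inner_eq_star_dotProduct] at hrayleigh
  simpa [hunit] using hrayleigh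

end Matrix.IsHermitian

theorem Finset.sum_sum_sub_sq {ι R : Type*} [CommRing R] (s : Finset ι) (x : ι → R) :
    ∑ i ∈ s, ∑ j ∈ s, (x i - x j) ^ 2 = 2 * (#s * ∑ i ∈ s, x i ^ 2 - (∑ i ∈ s, x i) ^ 2) := by
  simp only [sub_sq, sum_add_distrib, sum_sub_distrib, sum_const, ← mul_sum, ← sum_mul,
    nsmul_eq_mul]
  ring

namespace SimpleGraph

variable {V R : Type*} [Fintype V] [DecidableEq V] (G : SimpleGraph V) [DecidableRel G.Adj]

theorem map_lapMatrix {S : Type*} [NonAssocRing R] [NonAssocRing S] (f : R →+* S) :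
    (G.lapMatrix R).map f = G.lapMatrix S := by
  ext i j
  simp [lapMatrix, degMatrix, adjMatrix_apply, diagonal_apply, apply_ite f]

theorem dotProduct_lapMatrix_mulVec_le [Field R] [LinearOrder R] [IsStrictOrderedRing R]
    (x : V → R) : x ⬝ᵥ G.lapMatrix R *ᵥ x ≤ Fintype.card V * (x ⬝ᵥ x) := by
  have hle : ∑ i, ∑ j, (if G.Adj i j then (x i - x j) ^ 2 else 0) ≤ ∑ i, ∑ j, (x i - x j) ^ 2 :=
    sum_le_sum fun i _ ↦ sum_le_sum fun j _ ↦ by split_ifs <;> simp [sq_nonneg]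
  rw [sum_sum_sub_sq] at hle
  rw [← toLinearMap₂'_apply', lapMatrix_toLinearMap₂', dotProduct, ← card_univ]
  simp only [← sq]
  nlinarith [sq_nonneg (∑ i, x i)]

theorem eigenvalues_lapMatrix_le (i : V) :
    (G.isHermitian_lapMatrix ℝ).eigenvalues i ≤ Fintype.card V :=
  (G.isHermitian_lapMatrix ℝ).eigenvalues_le_of_forall_re_dotProduct_mulVec_le
    (fun x ↦ by simpa using G.dotProduct_lapMatrix_mulVec_le x) i

theorem exists_eigenvalues_lapMatrix_eq_zero [Nonempty V] :
    ∃ i, (G.isHermitian_lapMatrix ℝ).eigenvalues i = 0 := by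
  have hdet := G.det_lapMatrix_eq_zero
  rw [(G.isHermitian_lapMatrix ℝ).det_eq_prod_eigenvalues, prod_eq_zero_iff] at hdet
  simpa using hdet

variable {t : ℝ}

theorem one_le_det_one_add_smul_lapMatrix (ht : 0 ≤ t) : 1 ≤ (1 + t • G.lapMatrix ℝ).det := by
  rw [(G.isHermitian_lapMatrix ℝ).det_one_add_smul]
  exact one_le_prod fun i _ ↦
    le_add_of_nonneg_right (mul_nonneg ht ((posSemidef_lapMatrix ℝ G).eigenvalues_nonneg i))

theorem det_one_add_smul_lapMatrix_le_s12 (ht : 0 ≤ t) :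
    (1 + t • G.lapMatrix ℝ).det ≤ (1 + t * Fintype.card V) ^ (Fintype.card V - 1) := by
  cases isEmpty_or_nonempty V
  · simp
  obtain ⟨i₀, hi₀⟩ := G.exists_eigenvalues_lapMatrix_eq_zero
  rw [(G.isHermitian_lapMatrix ℝ).det_one_add_smul, ← mul_prod_erase _ _ (mem_univ i₀)]
  simp only [RCLike.ofReal_real_eq_id, id, hi₀, mul_zero, add_zero, one_mul]
  calc ∏ i ∈ univ.erase i₀, (1 + t * (G.isHermitian_lapMatrix ℝ).eigenvalues i)
      ≤ ∏ i ∈ univ.erase i₀, (1 + t * Fintype.card V) := by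
        refine prod_le_prod (fun i _ ↦ ?_) fun i _ ↦ ?_
        · exact add_nonneg zero_le_one
            (mul_nonneg ht ((posSemidef_lapMatrix ℝ G).eigenvalues_nonneg i))
        · gcongr
          exact G.eigenvalues_lapMatrix_le i
    _ = (1 + t * Fintype.card V) ^ (Fintype.card V - 1) := by
        rw [prod_const, card_erase_of_mem (mem_univ i₀), card_univ]

end SimpleGraph

theorem det_one_add_smul_lapMatrix_bounds_general
    {n : ℕ} (G : SimpleGraph (Fin n)) [DecidableRel G.Adj] (k : ℕ) :
    1 ≤ (1 + (k : ℤ) • G.lapMatrix ℤ).det ∧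
    (1 + (k : ℤ) • G.lapMatrix ℤ).det ≤ (1 + (k : ℤ) * n) ^ (n - 1) := by
  have hcast : ((1 + (k : ℤ) • G.lapMatrix ℤ).det : ℝ) = (1 + (k : ℝ) • G.lapMatrix ℝ).det := by
    rw [← eq_intCast (Int.castRingHom ℝ), RingHom.map_det, map_add, map_one, map_zsmul,
      RingHom.mapMatrix_apply, map_lapMatrix]
    norm_cast
  have hk : (0 : ℝ) ≤ k := k.cast_nonneg
  have hlower := G.one_le_det_one_add_smul_lapMatrix hk
  have hupper := G.det_one_add_smul_lapMatrix_le_s12 hk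
  rw [← hcast] at hlower hupper
  rw [Fintype.card_fin] at hupper
  exact ⟨mod_cast hlower, mod_cast hupper⟩

theorem det_one_add_smul_lapMatrix_bounds
    {n : ℕ} (G : SimpleGraph (Fin n)) [DecidableRel G.Adj] (k : ℕ) (hk : 0 < k) :
    1 ≤ (1 + (k : ℤ) • G.lapMatrix ℤ).det ∧
    (1 + (k : ℤ) • G.lapMatrix ℤ).det ≤ (1 + (k : ℤ) * n) ^ (n - 1) :=
  det_one_add_smul_lapMatrix_bounds_general G k
end

section
/- The sequence f(n) = Π_{j=1}^{n-1} (4 sin²(π j / n) - 1) is periodic in n with period 6, with values f(1)=1, f(2)=3, f(3)=4, f(4)=3, f(5)=1, f(6)=0 repeating. -/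
open Real

/-- `f n` is the product over the nonzero-index Laplacian eigenvalue factors
`4 sin²(π j / n) - 1`, `j = 1, …, n-1`, of the cycle graph `Cₙ`. -/
noncomputable def f (n : ℕ) : ℝ :=
  ∏ j ∈ Finset.range (n - 1), (4 * Real.sin (Real.pi * (j + 1) / n) ^ 2 - 1)

open Complex in
private lemma prod_sub_root (n : ℕ) (hn : 0 < n) (x : ℂ) :
    ∏ i ∈ Finset.range n, (x - Complex.exp (2 * Real.pi * I / n) ^ i) = x ^ n - 1 := by
  have h := X_pow_sub_C_eq_prod (Complex.isPrimitiveRoot_exp n hn.ne') hn (one_pow n)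
  apply_fun Polynomial.eval x at h
  simpa [Polynomial.eval_prod] using h.symm

open Complex in
private lemma f_eq (n : ℕ) (hn : 1 ≤ n) :
    f n = 2 - 2 * Real.cos (n * Real.pi / 3) := by
  set c : ℂ := Complex.exp (2 * Real.pi * I / n) with hc
  set μ : ℂ := Complex.exp (((Real.pi / 3 : ℝ) : ℂ) * I) with hμ
  have hμne : μ ≠ 0 := Complex.exp_ne_zero _
  have hμμ : μ * μ⁻¹ = 1 := mul_inv_cancel₀ hμne
  have hμinv : μ⁻¹ = Complex.exp (-(((Real.pi / 3 : ℝ) : ℂ) * I)) := by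
    rw [hμ, ← Complex.exp_neg]
  have hμsum : μ + μ⁻¹ = 1 := by
    rw [hμ, hμinv, neg_mul_eq_neg_mul, ← Complex.two_cos, ← Complex.ofReal_cos,
      Real.cos_pi_div_three]
    norm_num
  -- P x := ∏ j ∈ range (n-1), (x - c^(j+1)) satisfies P x * (x - 1) = x^n - 1
  have hP : ∀ x : ℂ, (∏ j ∈ Finset.range (n - 1), (x - c ^ (j + 1))) * (x - 1)
      = x ^ n - 1 := by
    intro x
    have h0 := prod_sub_root n (by omega) x
    rw [show n = (n - 1) + 1 by omega, Finset.prod_range_succ'] at h0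
    rw [show (n - 1) + 1 = n by omega] at h0
    simpa using h0
  -- product of the z_j = c^(j+1) is (-1)^(n-1)
  have hsq : ((-1 : ℂ)) ^ (n - 1) * (-1) ^ (n - 1) = 1 := by
    rw [← pow_add, ← two_mul, pow_mul]; norm_num
  have hene : ((-1 : ℂ)) ^ (n - 1) ≠ 0 := pow_ne_zero _ (by norm_num)
  have hprodz : ∏ j ∈ Finset.range (n - 1), c ^ (j + 1) = (-1) ^ (n - 1) := by
    have h0 := hP 0
    rw [zero_pow (show n ≠ 0 by omega)] at h0
    have h2 : ∏ j ∈ Finset.range (n - 1), ((0 : ℂ) - c ^ (j + 1))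
        = (-1) ^ (n - 1) * ∏ j ∈ Finset.range (n - 1), c ^ (j + 1) := by
      rw [Finset.prod_congr rfl (fun j _ => by ring : ∀ j ∈ Finset.range (n - 1),
          (0 : ℂ) - c ^ (j + 1) = (-1) * c ^ (j + 1)),
        Finset.prod_mul_distrib, Finset.prod_const, Finset.card_range]
    rw [h2] at h0
    have h3 : ((-1 : ℂ)) ^ (n - 1) * ∏ j ∈ Finset.range (n - 1), c ^ (j + 1) = 1 := by
      linear_combination -h0
    apply mul_left_cancel₀ hene
    rw [h3, hsq]
  -- per-factor identity
  have key : ∀ j ∈ Finset.range (n - 1),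
      c ^ (j + 1) * ((4 * Real.sin (Real.pi * (j + 1) / n) ^ 2 - 1 : ℝ) : ℂ)
        = (c ^ (j + 1) - μ) * (μ⁻¹ - c ^ (j + 1)) := by
    intro j _
    set z : ℂ := c ^ (j + 1) with hzdef
    have hz : z = Complex.exp (((2 * Real.pi * (j + 1) / n : ℝ) : ℂ) * I) := by
      rw [hzdef, hc, ← Complex.exp_nat_mul]
      congr 1
      push_cast
      ring
    have hzsum : z + z⁻¹ = ((2 * Real.cos (2 * Real.pi * (j + 1) / n) : ℝ) : ℂ) := by
      rw [hz, ← Complex.exp_neg, neg_mul_eq_neg_mul, ← Complex.two_cos,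
        ← Complex.ofReal_cos]
      push_cast
      ring
    have hzne : z ≠ 0 := by rw [hz]; exact Complex.exp_ne_zero _
    have hzz : z * z⁻¹ = 1 := mul_inv_cancel₀ hzne
    have hr : ((4 * Real.sin (Real.pi * (j + 1) / n) ^ 2 - 1 : ℝ) : ℂ)
        = 1 - (z + z⁻¹) := by
      rw [hzsum]
      norm_cast
      push_cast
      have h := Real.sin_sq_eq_half_sub (Real.pi * (j + 1) / n)
      rw [show 2 * (Real.pi * (j + 1) / n) = 2 * Real.pi * (j + 1) / n by ring] at h
      linarith
    rw [hr]
    linear_combination -hzz + hμμ - z * hμsum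
  -- assemble
  have hbig : ((-1 : ℂ)) ^ (n - 1) * ((f n : ℝ) : ℂ)
      = (∏ j ∈ Finset.range (n - 1), (c ^ (j + 1) - μ))
        * ∏ j ∈ Finset.range (n - 1), (μ⁻¹ - c ^ (j + 1)) := by
    rw [← hprodz, f, Complex.ofReal_prod, ← Finset.prod_mul_distrib,
      ← Finset.prod_mul_distrib]
    exact Finset.prod_congr rfl key
  have hflip : (∏ j ∈ Finset.range (n - 1), (c ^ (j + 1) - μ))
      = (-1) ^ (n - 1) * ∏ j ∈ Finset.range (n - 1), (μ - c ^ (j + 1)) := by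
    rw [Finset.prod_congr rfl (fun j _ => by ring : ∀ j ∈ Finset.range (n - 1),
        c ^ (j + 1) - μ = (-1) * (μ - c ^ (j + 1))),
      Finset.prod_mul_distrib, Finset.prod_const, Finset.card_range]
  have hone : (μ - 1) * (μ⁻¹ - 1) = 1 := by linear_combination hμμ - hμsum
  have hPμ := hP μ
  have hPμ' := hP μ⁻¹
  -- f n (as ℂ) equals (μ^n - 1) * ((μ⁻¹)^n - 1)
  have hfc : ((f n : ℝ) : ℂ) = (μ ^ n - 1) * ((μ⁻¹) ^ n - 1) := by
    apply mul_left_cancel₀ hene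
    rw [hbig]
    linear_combination (∏ j ∈ Finset.range (n - 1), (μ⁻¹ - c ^ (j + 1))) * hflip
      - (-1 : ℂ) ^ (n - 1) * (∏ j ∈ Finset.range (n - 1), (μ - c ^ (j + 1)))
          * (∏ j ∈ Finset.range (n - 1), (μ⁻¹ - c ^ (j + 1))) * hone
      + (-1 : ℂ) ^ (n - 1) * (∏ j ∈ Finset.range (n - 1), (μ⁻¹ - c ^ (j + 1)))
          * (μ⁻¹ - 1) * hPμ
      + (-1 : ℂ) ^ (n - 1) * (μ ^ n - 1) * hPμ'
  -- convert to the cosine closed form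
  have hμn : μ ^ n = Complex.exp (((n * Real.pi / 3 : ℝ) : ℂ) * I) := by
    rw [hμ, ← Complex.exp_nat_mul]
    congr 1
    push_cast
    ring
  have hμnn : (μ⁻¹) ^ n = Complex.exp (-(((n * Real.pi / 3 : ℝ) : ℂ) * I)) := by
    rw [inv_pow, hμn, ← Complex.exp_neg]
  have hμnprod : μ ^ n * (μ⁻¹) ^ n = 1 := by
    rw [hμn, hμnn, ← Complex.exp_add]
    simp
  have hcos : μ ^ n + (μ⁻¹) ^ n = ((2 * Real.cos (n * Real.pi / 3) : ℝ) : ℂ) := by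
    rw [hμn, hμnn, neg_mul_eq_neg_mul, ← Complex.two_cos, ← Complex.ofReal_cos]
    push_cast
    ring
  have : ((f n : ℝ) : ℂ) = ((2 - 2 * Real.cos (n * Real.pi / 3) : ℝ) : ℂ) := by
    rw [hfc]
    push_cast at hcos ⊢
    linear_combination hμnprod - hcos
  exact_mod_cast this

theorem cycle_factor_product_periodic :
    (∀ n : ℕ, 1 ≤ n → f (n + 6) = f n) ∧
    f 1 = 1 ∧ f 2 = 3 ∧ f 3 = 4 ∧ f 4 = 3 ∧ f 5 = 1 ∧ f 6 = 0 := by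
  refine ⟨fun n hn => ?_, ?_, ?_, ?_, ?_, ?_, ?_⟩
  · rw [f_eq n hn, f_eq (n + 6) (by omega)]
    rw [show ((n + 6 : ℕ) : ℝ) * Real.pi / 3 = (n : ℝ) * Real.pi / 3 + 2 * Real.pi by
      push_cast; ring, Real.cos_add_two_pi]
  · rw [f_eq 1 le_rfl]
    norm_num [Real.cos_pi_div_three]
  · rw [f_eq 2 (by norm_num)]
    rw [show ((2 : ℕ) : ℝ) * Real.pi / 3 = Real.pi - Real.pi / 3 by push_cast; ring,
      Real.cos_pi_sub, Real.cos_pi_div_three]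
    norm_num
  · rw [f_eq 3 (by norm_num)]
    rw [show ((3 : ℕ) : ℝ) * Real.pi / 3 = Real.pi by push_cast; ring, Real.cos_pi]
    norm_num
  · rw [f_eq 4 (by norm_num)]
    rw [show ((4 : ℕ) : ℝ) * Real.pi / 3 = Real.pi / 3 + Real.pi by push_cast; ring,
      Real.cos_add_pi, Real.cos_pi_div_three]
    norm_num
  · rw [f_eq 5 (by norm_num)]
    rw [show ((5 : ℕ) : ℝ) * Real.pi / 3 = 2 * Real.pi - Real.pi / 3 by push_cast; ring,
      Real.cos_two_pi_sub, Real.cos_pi_div_three]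
    norm_num
  · rw [f_eq 6 (by norm_num)]
    rw [show ((6 : ℕ) : ℝ) * Real.pi / 3 = 2 * Real.pi by push_cast; ring,
      Real.cos_two_pi]
    norm_num
end
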